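/- arXiv:2002.07909 — 2 statements merged into one kernel-verified Lean document; each statement's English description precedes it below -/
import Mathlib

section
/- The boundary value problem ∇[p(t+1)∇_{a*}^ν x(t+1)] = 0 for t ∈ ℕ_{a+1}^{b-1}, with αx(a) − β∇_{a*}^ν x(a+1) = 0 and γx(b) + δ∇_{a*}^ν x(b) = 0, has only the trivial solution if and only if ρ := αγ∇_a^{-ν}(1/p)(b) + αδ/p(b) + βγ/p(a+1) ≠ 0. -/
open Finset

/-- Generalized rising function `x^{↑μ} = Γ(x+μ)/Γ(x)` (equals 0 when `Γ x = 0`,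
matching the convention `0^{↑ν} = 0`). -/
noncomputable def rise (x μ : ℝ) : ℝ := Real.Gamma (x + μ) / Real.Gamma x

/-- Nabla (backward) difference. -/
def nabla (f : ℤ → ℝ) (t : ℤ) : ℝ := f t - f (t - 1)

/-- Caputo nabla fractional difference of order `ν ∈ (0,1)` based at `a`. -/
noncomputable def caputo (ν : ℝ) (a : ℤ) (x : ℤ → ℝ) (t : ℤ) : ℝ :=
  ∑ τ ∈ Finset.Icc (a + 1) t,
    rise ((t - τ + 1 : ℤ) : ℝ) (-ν) / Real.Gamma (1 - ν) * nabla x τ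

/-- Nabla fractional sum of order `ν` based at `a`. -/
noncomputable def fsum (ν : ℝ) (a : ℤ) (f : ℤ → ℝ) (t : ℤ) : ℝ :=
  ∑ τ ∈ Finset.Icc (a + 1) t,
    rise ((t - τ + 1 : ℤ) : ℝ) (ν - 1) / Real.Gamma ν * f τ

/-- The self-adjoint operator `L_a x(t) = ∇[p(t+1)∇_{a*}^ν x(t+1)] + q(t)x(t)`. -/
noncomputable def Lop (ν : ℝ) (a : ℤ) (p q : ℤ → ℝ) (x : ℤ → ℝ) (t : ℤ) : ℝ :=
  (p (t + 1) * caputo ν a x (t + 1) - p t * caputo ν a x t) + q t * x t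

/-!
The Caputo difference `∇_{a*}^ν` and the fractional sum `∇_a^{-ν}` are discrete convolutions,
based at `a`, with the kernels `multichoose (1 - ν) m` and `multichoose ν m` (the coefficients of
`(1 - z)^{ν - 1}` and `(1 - z)^{-ν}`), while `∇` acts on generating series as multiplication by
`1 - z`. By Chu–Vandermonde the product of the two kernel series is `(1 - z)⁻¹`, so `∇_a^{-ν}`
inverts `∇_{a*}^ν` up to the initial value. Hence the solutions of `∇[p ∇_{a*}^ν x] = 0` on
`[a, b]` are exactly `x = c₀ + c₁ ∇_a^{-ν}(1/p)`, and the boundary conditions are a linear system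
for `(c₀, c₁)` whose determinant is `ρ`.
-/

open PowerSeries

theorem Real.Gamma_add_nat_eq_mul_ascPochhammer {z : ℝ} (hz : 0 < z) (n : ℕ) :
    Real.Gamma (z + n) = Real.Gamma z * (ascPochhammer ℝ n).eval z := by
  induction n with
  | zero => simp
  | succ n ih =>
    rw [Nat.cast_succ, ← add_assoc, Real.Gamma_add_one (by positivity), ih,
      ascPochhammer_succ_eval]
    ring

theorem Ring.multichoose_eq_Gamma_div {z : ℝ} (hz : 0 < z) (n : ℕ) :
    Ring.multichoose z n = Real.Gamma (z + n) / (Real.Gamma z * n.factorial) := by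
  have h := Ring.factorial_nsmul_multichoose_eq_ascPochhammer z n
  rw [Polynomial.ascPochhammer_smeval_eq_eval, nsmul_eq_mul] at h
  rw [Real.Gamma_add_nat_eq_mul_ascPochhammer hz, ← h]
  have := (Real.Gamma_pos_of_pos hz).ne'
  field_simp

theorem rise_div_Gamma_eq_multichoose {z : ℝ} (hz : 0 < z) (m : ℕ) :
    rise ((m : ℝ) + 1) (z - 1) / Real.Gamma z = Ring.multichoose z m := by
  rw [rise, Real.Gamma_nat_eq_factorial, Ring.multichoose_eq_Gamma_div hz]
  ring_nf

theorem Ring.multichoose_add {R : Type*} [CommRing R] [BinomialRing R] (r s : R) (k : ℕ) :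
    Ring.multichoose (r + s) k =
      ∑ ij ∈ antidiagonal k, Ring.multichoose r ij.1 * Ring.multichoose s ij.2 := by
  have key : ∀ (t : R) (n : ℕ), Ring.multichoose t n = Int.negOnePow n • Ring.choose (-t) n := by
    intro t n
    rw [Ring.choose_neg', smul_smul, ← Int.negOnePow_add, Int.negOnePow_even _ (by simp), one_smul]
  simp only [key, neg_add, Ring.add_choose_eq k (Commute.all (-r) (-s)), smul_sum]
  refine sum_congr rfl fun ij hij => ?_
  rw [← mem_antidiagonal.mp hij, Nat.cast_add, Int.negOnePow_add, smul_mul_smul_comm]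

theorem PowerSeries.mk_multichoose_mul_mk_multichoose {R : Type*} [CommRing R] [BinomialRing R]
    (r s : R) :
    mk (Ring.multichoose r) * mk (Ring.multichoose s) = mk (Ring.multichoose (r + s)) := by
  ext k
  rw [coeff_mul, coeff_mk, Ring.multichoose_add]
  simp only [coeff_mk]

theorem PowerSeries.mk_multichoose_mul_mk_multichoose_one_sub {R : Type*} [CommRing R]
    [BinomialRing R] (r : R) :
    mk (Ring.multichoose r) * mk (Ring.multichoose (1 - r)) * (1 - X) = 1 := by
  rw [mk_multichoose_mul_mk_multichoose, add_sub_cancel,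
    show Ring.multichoose (1 : R) = 1 from funext Ring.multichoose_one, mk_one_mul_one_sub_eq_one]

noncomputable def nablaConv (k : ℕ → ℝ) (a : ℤ) (f : ℤ → ℝ) (t : ℤ) : ℝ :=
  ∑ τ ∈ Icc (a + 1) t, k (t - τ).toNat * f τ

def seriesFrom (a : ℤ) (f : ℤ → ℝ) : ℝ⟦X⟧ := mk fun j => f (a + 1 + j)

theorem rise_div_Gamma_eq_multichoose_toNat {z : ℝ} (hz : 0 < z) {τ t : ℤ} (h : τ ≤ t) :
    rise ((t - τ + 1 : ℤ) : ℝ) (z - 1) / Real.Gamma z = Ring.multichoose z (t - τ).toNat := by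
  rw [← rise_div_Gamma_eq_multichoose hz]
  have hcast : (((t - τ).toNat : ℤ) : ℝ) = ((t - τ : ℤ) : ℝ) := by
    rw [Int.toNat_of_nonneg (sub_nonneg.mpr h)]
  push_cast at hcast ⊢
  rw [hcast]

theorem caputo_eq_nablaConv {ν : ℝ} (hν1 : ν < 1) (a : ℤ) (x : ℤ → ℝ) :
    caputo ν a x = nablaConv (Ring.multichoose (1 - ν)) a (nabla x) := by
  funext t
  refine sum_congr rfl fun τ hτ => ?_
  rw [show -ν = (1 - ν) - 1 by ring,
    rise_div_Gamma_eq_multichoose_toNat (by linarith) (mem_Icc.mp hτ).2]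

theorem fsum_eq_nablaConv {ν : ℝ} (hν : 0 < ν) (a : ℤ) (f : ℤ → ℝ) :
    fsum ν a f = nablaConv (Ring.multichoose ν) a f := by
  funext t
  refine sum_congr rfl fun τ hτ => ?_
  rw [rise_div_Gamma_eq_multichoose_toNat hν (mem_Icc.mp hτ).2]

theorem fsum_self (ν : ℝ) (a : ℤ) (f : ℤ → ℝ) : fsum ν a f a = 0 := by
  simp [fsum]

theorem seriesFrom_nablaConv (k : ℕ → ℝ) (a : ℤ) (f : ℤ → ℝ) :
    seriesFrom a (nablaConv k a f) = mk k * seriesFrom a f := by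
  ext n
  simp only [seriesFrom, nablaConv, coeff_mk, coeff_mul]
  refine sum_nbij' (fun τ => ((a + 1 + n - τ).toNat, (τ - a - 1).toNat)) (fun p => a + 1 + p.2)
    ?_ ?_ ?_ ?_ ?_
  · intro τ hτ
    rw [mem_Icc] at hτ
    rw [HasAntidiagonal.mem_antidiagonal]
    omega
  · rintro ⟨i, j⟩ h
    rw [HasAntidiagonal.mem_antidiagonal] at h
    rw [mem_Icc]
    omega
  · intro τ hτ
    rw [mem_Icc] at hτ
    dsimp only
    omega
  · rintro ⟨i, j⟩ h
    rw [HasAntidiagonal.mem_antidiagonal] at h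
    ext <;> dsimp only <;> omega
  · intro τ hτ
    rw [mem_Icc] at hτ
    dsimp only
    rw [show a + 1 + ((τ - a - 1).toNat : ℤ) = τ by omega]

theorem seriesFrom_nabla (a : ℤ) (x : ℤ → ℝ) :
    seriesFrom a (nabla x) = (1 - X) * seriesFrom a (fun t => x t - x a) := by
  ext (_ | n)
  · simp [seriesFrom, nabla]
  · simp only [seriesFrom, nabla, coeff_mk, Nat.cast_add, Nat.cast_one, sub_mul, one_mul, map_sub,
      coeff_succ_X_mul, sub_sub_sub_cancel_right, sub_right_inj]
    congr 1
    ring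

theorem eq_of_seriesFrom_eq {a t : ℤ} {f g : ℤ → ℝ} (h : seriesFrom a f = seriesFrom a g)
    (ht : a + 1 ≤ t) : f t = g t := by
  have := congrArg (coeff (t - a - 1).toNat) h
  simp only [seriesFrom, coeff_mk] at this
  rwa [show a + 1 + ((t - a - 1).toNat : ℤ) = t by omega] at this

theorem fsum_caputo {ν : ℝ} (hν : 0 < ν) (hν1 : ν < 1) {a t : ℤ} (x : ℤ → ℝ) (ht : a ≤ t) :
    fsum ν a (caputo ν a x) t = x t - x a := by
  rcases ht.eq_or_lt with rfl | ht
  · rw [fsum_self, sub_self]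
  refine eq_of_seriesFrom_eq (g := fun t => x t - x a) ?_ ht
  rw [fsum_eq_nablaConv hν, caputo_eq_nablaConv hν1, seriesFrom_nablaConv, seriesFrom_nablaConv,
    seriesFrom_nabla, ← mul_assoc, ← mul_assoc, mk_multichoose_mul_mk_multichoose_one_sub, one_mul]

theorem caputo_const_add_fsum {ν : ℝ} (hν : 0 < ν) (hν1 : ν < 1) {a t : ℤ} (u : ℝ)
    (f : ℤ → ℝ) (ht : a + 1 ≤ t) : caputo ν a (fun s => u + fsum ν a f s) t = f t := by
  refine eq_of_seriesFrom_eq ?_ ht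
  rw [caputo_eq_nablaConv hν1, seriesFrom_nablaConv, seriesFrom_nabla]
  simp only [fsum_self, add_zero, add_sub_cancel_left]
  rw [fsum_eq_nablaConv hν, seriesFrom_nablaConv]
  linear_combination seriesFrom a f * mk_multichoose_mul_mk_multichoose_one_sub ν

theorem fsum_congr {ν : ℝ} {a t : ℤ} {f g : ℤ → ℝ} (h : ∀ τ, a + 1 ≤ τ → τ ≤ t → f τ = g τ) :
    fsum ν a f t = fsum ν a g t :=
  sum_congr rfl fun τ hτ => by rw [h τ (mem_Icc.mp hτ).1 (mem_Icc.mp hτ).2]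

theorem caputo_congr {ν : ℝ} {a t : ℤ} {x y : ℤ → ℝ} (h : ∀ s, a ≤ s → s ≤ t → x s = y s) :
    caputo ν a x t = caputo ν a y t :=
  sum_congr rfl fun τ hτ => by
    have := mem_Icc.mp hτ
    rw [nabla, nabla, h τ (by omega) this.2, h (τ - 1) (by omega) (by omega)]

theorem fsum_const_mul (ν : ℝ) (a : ℤ) (c : ℝ) (f : ℤ → ℝ) (t : ℤ) :
    fsum ν a (fun τ => c * f τ) t = c * fsum ν a f t := by
  simp only [fsum, mul_sum]
  exact sum_congr rfl fun τ _ => by ring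

theorem eq_of_forall_add_one_sub_eq_zero {g : ℤ → ℝ} {m n : ℤ}
    (h : ∀ t, m ≤ t → t ≤ n - 1 → g (t + 1) - g t = 0) : ∀ t, m ≤ t → t ≤ n → g t = g m := by
  intro t hmt
  induction t, hmt using Int.leInduction with
  | base => exact fun _ => rfl
  | succ t hmt ih =>
    intro htn
    rw [sub_eq_zero.mp (h t hmt (by omega)), ih (by omega)]

section BoundaryValueProblem

open scoped Matrix

variable {ν : ℝ} {a b : ℤ} {p : ℤ → ℝ}

def IsSolution (ν : ℝ) (a b : ℤ) (p x : ℤ → ℝ) : Prop :=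
  ∀ t, a + 1 ≤ t → t ≤ b - 1 → p (t + 1) * caputo ν a x (t + 1) - p t * caputo ν a x t = 0

noncomputable def generalSolution (ν : ℝ) (a : ℤ) (p : ℤ → ℝ) (c : Fin 2 → ℝ) (t : ℤ) : ℝ :=
  c 0 + c 1 * fsum ν a (fun τ => 1 / p τ) t

noncomputable def bcMatrix (ν : ℝ) (a b : ℤ) (p : ℤ → ℝ) (α β γ δ : ℝ) :
    Matrix (Fin 2) (Fin 2) ℝ :=
  !![α, -β / p (a + 1); γ, γ * fsum ν a (fun τ => 1 / p τ) b + δ / p b]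

theorem det_bcMatrix (α β γ δ : ℝ) : (bcMatrix ν a b p α β γ δ).det =
    α * γ * fsum ν a (fun τ => 1 / p τ) b + α * δ / p b + β * γ / p (a + 1) := by
  rw [bcMatrix, Matrix.det_fin_two_of]
  ring

theorem generalSolution_base (c : Fin 2 → ℝ) : generalSolution ν a p c a = c 0 := by
  rw [generalSolution, fsum_self, mul_zero, add_zero]

theorem caputo_generalSolution (hν : 0 < ν) (hν1 : ν < 1) (c : Fin 2 → ℝ) {t : ℤ}
    (ht : a + 1 ≤ t) : caputo ν a (generalSolution ν a p c) t = c 1 / p t := by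
  have h := caputo_const_add_fsum hν hν1 (c 0) (fun τ => c 1 * (1 / p τ)) ht
  simp only [fsum_const_mul] at h
  rwa [← mul_one_div]

theorem isSolution_generalSolution (hν : 0 < ν) (hν1 : ν < 1)
    (hp : ∀ t, a + 1 ≤ t → t ≤ b → p t ≠ 0) (c : Fin 2 → ℝ) :
    IsSolution ν a b p (generalSolution ν a p c) := by
  intro t ht₁ ht₂
  rw [caputo_generalSolution hν hν1 c ht₁, caputo_generalSolution hν hν1 c (by omega),
    mul_div_cancel₀ _ (hp t ht₁ (by omega)), mul_div_cancel₀ _ (hp (t + 1) (by omega) (by omega)),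
    sub_self]

theorem bcMatrix_mulVec (hν : 0 < ν) (hν1 : ν < 1) (hab : a + 1 ≤ b) (α β γ δ : ℝ)
    (c : Fin 2 → ℝ) : bcMatrix ν a b p α β γ δ *ᵥ c =
      ![α * generalSolution ν a p c a - β * caputo ν a (generalSolution ν a p c) (a + 1),
        γ * generalSolution ν a p c b + δ * caputo ν a (generalSolution ν a p c) b] := by
  rw [generalSolution_base, caputo_generalSolution hν hν1 c le_rfl,
    caputo_generalSolution hν hν1 c hab, generalSolution, Matrix.mulVec_fin_two]
  ext i
  fin_cases i <;>
    simp only [bcMatrix, Matrix.of_apply, Matrix.cons_val', Matrix.cons_val_zero,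
      Matrix.cons_val_one, Matrix.cons_val_fin_one, Fin.zero_eta, Fin.mk_one] <;> ring

theorem eq_zero_of_generalSolution_eq_zero (hν : 0 < ν) (hν1 : ν < 1) (hab : a + 1 ≤ b)
    (hp : p (a + 1) ≠ 0) {c : Fin 2 → ℝ}
    (h : ∀ t, a ≤ t → t ≤ b → generalSolution ν a p c t = 0) : c = 0 := by
  have hc₀ : c 0 = 0 := generalSolution_base (ν := ν) (p := p) c ▸ h a le_rfl (by omega)
  have hcaputo : caputo ν a (generalSolution ν a p c) (a + 1) = 0 := by
    rw [caputo_congr (y := fun _ => 0) fun s hs₁ hs₂ => h s hs₁ (by omega)]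
    simp [caputo, nabla]
  rw [caputo_generalSolution hν hν1 c le_rfl, div_eq_zero_iff, or_iff_left hp] at hcaputo
  ext i
  fin_cases i
  exacts [hc₀, hcaputo]

theorem eqOn_generalSolution (hν : 0 < ν) (hν1 : ν < 1) (hp : ∀ t, a + 1 ≤ t → t ≤ b → p t ≠ 0)
    {x : ℤ → ℝ} (hx : IsSolution ν a b p x) :
    ∀ t, a ≤ t → t ≤ b →
      x t = generalSolution ν a p ![x a, p (a + 1) * caputo ν a x (a + 1)] t := by
  have hflux := eq_of_forall_add_one_sub_eq_zero (g := fun t => p t * caputo ν a x t) hx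
  intro t ht₁ ht₂
  simp only [generalSolution, Matrix.cons_val_one, Matrix.cons_val_zero]
  rw [← sub_eq_iff_eq_add', ← fsum_caputo hν hν1 x ht₁, ← fsum_const_mul]
  refine fsum_congr fun τ hτ₁ hτ₂ => ?_
  rw [← hflux τ hτ₁ (by omega)]
  field_simp [hp τ hτ₁ (by omega)]

theorem bcMatrix_mulVec_eq_zero (hν : 0 < ν) (hν1 : ν < 1) (hab : a + 1 ≤ b)
    (hp : ∀ t, a + 1 ≤ t → t ≤ b → p t ≠ 0) {α β γ δ : ℝ} {x : ℤ → ℝ} (hx : IsSolution ν a b p x)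
    (hbc₁ : α * x a - β * caputo ν a x (a + 1) = 0) (hbc₂ : γ * x b + δ * caputo ν a x b = 0) :
    bcMatrix ν a b p α β γ δ *ᵥ ![x a, p (a + 1) * caputo ν a x (a + 1)] = 0 := by
  have hx' := eqOn_generalSolution hν hν1 hp hx
  rw [bcMatrix_mulVec hν hν1 hab, ← hx' a le_rfl (by omega), ← hx' b (by omega) le_rfl,
    ← caputo_congr fun s hs₁ hs₂ => hx' s hs₁ (by omega),
    ← caputo_congr fun s hs₁ hs₂ => hx' s hs₁ hs₂, hbc₁, hbc₂]
  ext i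
  fin_cases i <;> rfl

end BoundaryValueProblem

theorem bvp_trivial_iff_rho_ne_zero_general (ν : ℝ) (hν : 0 < ν) (hν1 : ν < 1) (a b : ℤ)
    (hab : a + 2 ≤ b) (p : ℤ → ℝ) (hp : ∀ t, a + 1 ≤ t → t ≤ b → 0 < p t)
    (α β γ δ : ℝ) :
    (∀ x : ℤ → ℝ,
      (∀ t, a + 1 ≤ t → t ≤ b - 1 →
        p (t + 1) * caputo ν a x (t + 1) - p t * caputo ν a x t = 0) →
      α * x a - β * caputo ν a x (a + 1) = 0 →
      γ * x b + δ * caputo ν a x b = 0 →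
      ∀ t, a ≤ t → t ≤ b → x t = 0) ↔
    α * γ * fsum ν a (fun τ => 1 / p τ) b + α * δ / p b + β * γ / p (a + 1) ≠ 0 := by
  have hab' : a + 1 ≤ b := by omega
  have hp' : ∀ t, a + 1 ≤ t → t ≤ b → p t ≠ 0 := fun t ht₁ ht₂ => (hp t ht₁ ht₂).ne'
  rw [← det_bcMatrix, ne_eq, ← Matrix.exists_mulVec_eq_zero_iff, not_exists]
  constructor
  · rintro htrivial c ⟨hc_ne, hc⟩
    have hbc := bcMatrix_mulVec (p := p) hν hν1 hab' α β γ δ c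
    rw [hc] at hbc
    exact hc_ne <| eq_zero_of_generalSolution_eq_zero hν hν1 hab' (hp' _ le_rfl hab') <|
      htrivial _ (isSolution_generalSolution hν hν1 hp' c) (by simpa using (congrFun hbc 0).symm)
        (by simpa using (congrFun hbc 1).symm)
  · intro hker x hx hbc₁ hbc₂ t ht₁ ht₂
    have hc := bcMatrix_mulVec_eq_zero hν hν1 hab' hp' hx hbc₁ hbc₂
    have hc_zero : ![x a, p (a + 1) * caputo ν a x (a + 1)] = 0 := by
      by_contra hc_ne
      exact hker _ ⟨hc_ne, hc⟩
    rw [eqOn_generalSolution hν hν1 hp' hx t ht₁ ht₂, hc_zero]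
    simp [generalSolution]

theorem bvp_trivial_iff_rho_ne_zero (ν : ℝ) (hν : 0 < ν) (hν1 : ν < 1) (a b : ℤ)
    (hab : a + 2 ≤ b) (p : ℤ → ℝ) (hp : ∀ t, a + 1 ≤ t → t ≤ b → 0 < p t)
    (α β γ δ : ℝ) (hαβ : 0 < α ^ 2 + β ^ 2) (hγδ : 0 < γ ^ 2 + δ ^ 2) :
    (∀ x : ℤ → ℝ,
      (∀ t, a + 1 ≤ t → t ≤ b - 1 →
        p (t + 1) * caputo ν a x (t + 1) - p t * caputo ν a x t = 0) →
      α * x a - β * caputo ν a x (a + 1) = 0 →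
      γ * x b + δ * caputo ν a x b = 0 →
      ∀ t, a ≤ t → t ≤ b → x t = 0) ↔
    α * γ * fsum ν a (fun τ => 1 / p τ) b + α * δ / p b + β * γ / p (a + 1) ≠ 0 :=
  bvp_trivial_iff_rho_ne_zero_general ν hν hν1 a b hab p hp α β γ δ
end

section
/- For every t ∈ ℕ_{a+1}^b, Σ_{s=a+1}^{b} |G(t,s) − G(t−1,s)| ≤ (b−a)/(ν+1), where G is the Green's function for ∇∇_{a*}^ν x(t+1)=0, x(a)=x(b)=0 and b − a ≥ 2. -/
open Finset

/-- Green function for the conjugate BVP `∇∇_{a*}^ν x(t+1) = 0`, `x(a)=x(b)=0`. -/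
noncomputable def Grn (ν : ℝ) (a b t s : ℤ) : ℝ :=
  if t ≤ s then
    -(rise ((b - s : ℤ) : ℝ) ν * rise ((t - a : ℤ) : ℝ) ν) /
      (Real.Gamma (1 + ν) * rise ((b - a : ℤ) : ℝ) ν)
  else
    -(rise ((b - s : ℤ) : ℝ) ν * rise ((t - a : ℤ) : ℝ) ν) /
      (Real.Gamma (1 + ν) * rise ((b - a : ℤ) : ℝ) ν)
      + rise ((t - s : ℤ) : ℝ) ν / Real.Gamma (1 + ν)

/-! The backward difference in `t` of the Green's function is
`∇ₜG(t,s) = ((t-s)^{↑(ν-1)} - (t-a)^{↑(ν-1)} (b-s)^{↑ν} / (b-a)^{↑ν}) / Γ(ν)`.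
It is `≥ 0` for `s < t`, because `(k+d)^{↑ν} / k^{↑(ν-1)}` increases with `k`, and `≤ 0` for
`s ≥ t`, where the first term vanishes. With the signs known, both halves of the sum
telescope via `∇ m^{↑(μ+1)} = (μ+1) m^{↑μ}`, and the closed form is bounded using
`(b-t)^{↑(ν+1)} ≤ (b-t) (b-a)^{↑ν}`, `(t-a)^{↑(ν-1)} ≤ Γ(ν)`, and `(t-a)^{↑(ν-1)} ≤ Γ(ν+1)`
when `t - a ≥ 2`. -/

section Rise

variable {x μ : ℝ}

lemma rise_add_one' (x μ : ℝ) : rise x (μ + 1) = x * rise (x + 1) μ := by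
  unfold rise
  rcases eq_or_ne x 0 with rfl | hx
  · simp
  · rw [Real.Gamma_add_one hx, mul_div_assoc', mul_div_mul_left _ _ hx, add_right_comm,
      add_assoc]

lemma rise_add_one (h : x + μ ≠ 0) : rise x (μ + 1) = (x + μ) * rise x μ := by
  unfold rise
  rw [← add_assoc, Real.Gamma_add_one h, mul_div_assoc]

lemma rise_add_one_left_mul (h : x + μ ≠ 0) : rise (x + 1) μ * x = rise x μ * (x + μ) := by
  rw [mul_comm, ← rise_add_one', rise_add_one h, mul_comm]

lemma rise_pos (hx : 0 < x) (hxμ : 0 < x + μ) : 0 < rise x μ :=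
  div_pos (Real.Gamma_pos_of_pos hxμ) (Real.Gamma_pos_of_pos hx)

lemma rise_intCast_of_nonpos {m : ℤ} (hm : m ≤ 0) (μ : ℝ) : rise m μ = 0 := by
  obtain ⟨n, rfl⟩ := Int.exists_eq_neg_ofNat hm
  simp [rise, Real.Gamma_neg_nat_eq_zero]

lemma rise_intCast_pos {m : ℤ} (hm : 1 ≤ m) (hμ : -1 < μ) : 0 < rise m μ := by
  have : (1 : ℝ) ≤ m := by exact_mod_cast hm
  exact rise_pos (by linarith) (by linarith)

lemma rise_intCast_nonneg (hμ : -1 < μ) (m : ℤ) : 0 ≤ rise m μ := by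
  rcases le_or_gt m 0 with hm | hm
  · exact (rise_intCast_of_nonpos hm μ).ge
  · exact (rise_intCast_pos hm hμ).le

lemma rise_intCast_sub_one (m : ℤ) (μ : ℝ) : rise ↑(m - 1) (μ + 1) = (m - 1) * rise m μ := by
  rw [rise_add_one']
  push_cast
  rw [sub_add_cancel]

lemma rise_intCast_sub_rise_intCast_sub_one (hμ : -1 < μ) (m : ℤ) :
    rise m (μ + 1) - rise ↑(m - 1) (μ + 1) = (μ + 1) * rise m μ := by
  rcases le_or_gt m 0 with hm | hm
  · simp only [rise_intCast_of_nonpos hm, rise_intCast_of_nonpos (show m - 1 ≤ 0 by omega),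
      sub_zero, mul_zero]
  · have : (1 : ℝ) ≤ m := by exact_mod_cast hm
    rw [rise_add_one (by linarith), rise_intCast_sub_one]
    ring

lemma sum_Icc_rise_intCast (hμ : -1 < μ) (e c : ℤ) {d : ℤ} (hcd : c - 1 ≤ d) :
    ∑ s ∈ Icc c d, rise ↑(e - s) μ =
      (rise ↑(e - c) (μ + 1) - rise ↑(e - d - 1) (μ + 1)) / (μ + 1) := by
  have hμ1 : μ + 1 ≠ 0 := by linarith
  induction d, hcd using Int.leInduction with
  | base => simp [show e - (c - 1) - 1 = e - c by ring]
  | succ d hcd ih =>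
    rw [← insert_Icc_right_eq_Icc_add_one (by omega), sum_insert (by simp), ih,
      eq_div_iff hμ1, add_mul, div_mul_cancel₀ _ hμ1, mul_comm,
      ← rise_intCast_sub_rise_intCast_sub_one hμ, show e - (d + 1) = e - d - 1 by ring]
    ring

lemma rise_intCast_monotoneOn (hμ : 0 ≤ μ) : MonotoneOn (fun m : ℤ ↦ rise m μ) (Set.Ici 1) := by
  refine monotoneOn_of_le_add_one Set.ordConnected_Ici fun m _ hm _ ↦ ?_
  have hm : (1 : ℝ) ≤ m := by exact_mod_cast hm
  have key := rise_add_one_left_mul (x := m) (μ := μ) (by linarith)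
  have := rise_pos (μ := μ) (x := m) (by linarith) (by linarith)
  push_cast
  nlinarith

lemma rise_intCast_antitoneOn (hμ : -1 < μ) (hμ0 : μ ≤ 0) :
    AntitoneOn (fun m : ℤ ↦ rise m μ) (Set.Ici 1) := by
  refine antitoneOn_of_add_one_le Set.ordConnected_Ici fun m _ hm _ ↦ ?_
  have hm : (1 : ℝ) ≤ m := by exact_mod_cast hm
  have key := rise_add_one_left_mul (x := m) (μ := μ) (by linarith)
  have := rise_pos (μ := μ) (x := m) (by linarith) (by linarith)
  push_cast
  nlinarith

lemma rise_intCast_le_mul_rise (hμ : 0 ≤ μ) {k n : ℤ} (hk : 0 ≤ k) (hkn : k < n) :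
    rise k (μ + 1) ≤ k * rise n μ := by
  have hk' : (0 : ℝ) ≤ k := by exact_mod_cast hk
  have hmono := rise_intCast_monotoneOn hμ (Set.mem_Ici.2 (by omega : 1 ≤ k + 1))
    (Set.mem_Ici.2 (by omega : 1 ≤ n)) (by omega : k + 1 ≤ n)
  dsimp only at hmono
  push_cast at hmono
  rw [rise_add_one']
  exact mul_le_mul_of_nonneg_left hmono hk'

end Rise

lemma sum_Icc_abs_eq_sub_of_sign {α : Type*} [AddCommGroup α] [LinearOrder α]
    [IsOrderedAddMonoid α] {f : ℤ → α} {c t d : ℤ} (hct : c ≤ t) (htd : t ≤ d + 1)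
    (hpos : ∀ s ∈ Icc c (t - 1), 0 ≤ f s) (hneg : ∀ s ∈ Icc t d, f s ≤ 0) :
    ∑ s ∈ Icc c d, |f s| = ∑ s ∈ Icc c (t - 1), f s - ∑ s ∈ Icc t d, f s := by
  have hunion : Icc c d = Icc c (t - 1) ∪ Icc t d := by
    ext s
    simp only [mem_union, mem_Icc]
    omega
  have hdisj : Disjoint (Icc c (t - 1)) (Icc t d) :=
    disjoint_left.2 fun s h1 h2 ↦ by rw [mem_Icc] at h1 h2; omega
  rw [hunion, sum_union hdisj, sum_congr rfl fun s hs ↦ abs_of_nonneg (hpos s hs),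
    sum_congr rfl fun s hs ↦ abs_of_nonpos (hneg s hs), sum_neg_distrib, ← sub_eq_add_neg]

section GreenFunction

variable {ν : ℝ}

lemma rise_intCast_sub_one_le_Gamma (hν0 : 0 < ν) (hν1 : ν ≤ 1) {m : ℤ} (hm : 1 ≤ m) :
    rise m (ν - 1) ≤ Real.Gamma ν := by
  have := rise_intCast_antitoneOn (μ := ν - 1) (by linarith) (by linarith)
    (Set.mem_Ici.2 le_rfl) (Set.mem_Ici.2 hm) hm
  simpa [rise] using this

lemma rise_intCast_sub_one_le_Gamma_add_one (hν0 : 0 < ν) (hν1 : ν ≤ 1) {m : ℤ} (hm : 2 ≤ m) :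
    rise m (ν - 1) ≤ Real.Gamma (ν + 1) := by
  calc rise m (ν - 1) ≤ rise ((2 : ℤ) : ℝ) (ν - 1) :=
        rise_intCast_antitoneOn (by linarith) (by linarith)
          (Set.mem_Ici.2 (by norm_num : (1 : ℤ) ≤ 2)) (Set.mem_Ici.2 (by omega)) hm
    _ = Real.Gamma (ν + 1) := by
        rw [rise, Int.cast_ofNat, Real.Gamma_two, div_one, add_sub_left_comm]
        norm_num

lemma rise_intCast_sub_one_mul_le (hν0 : 0 < ν) (hν1 : ν ≤ 1) {m : ℤ} (hm : 1 ≤ m) {j : ℝ}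
    (hj : 0 ≤ j) :
    rise m (ν - 1) * ((m - 1) + ν * j) ≤ Real.Gamma (ν + 1) * ((m - 1) + j) := by
  have hfirst : ((m : ℝ) - 1) * rise m (ν - 1) ≤ ((m : ℝ) - 1) * Real.Gamma (ν + 1) := by
    rcases eq_or_lt_of_le hm with rfl | hm2
    · simp
    · have : (2 : ℝ) ≤ m := by exact_mod_cast (by omega : (2 : ℤ) ≤ m)
      exact mul_le_mul_of_nonneg_left
        (rise_intCast_sub_one_le_Gamma_add_one hν0 hν1 (by omega)) (by linarith)
  have hsecond : ν * j * rise m (ν - 1) ≤ ν * j * Real.Gamma ν :=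
    mul_le_mul_of_nonneg_left (rise_intCast_sub_one_le_Gamma hν0 hν1 hm) (by positivity)
  rw [Real.Gamma_add_one hν0.ne'] at hfirst ⊢
  linear_combination hfirst + hsecond

lemma rise_div_rise_sub_one_monotoneOn (hν0 : 0 < ν) (hν1 : ν ≤ 1) {d : ℤ} (hd : 0 ≤ d) :
    MonotoneOn (fun k : ℤ ↦ rise ↑(k + d) ν / rise k (ν - 1)) (Set.Ici 1) := by
  refine monotoneOn_of_le_add_one Set.ordConnected_Ici fun k _ hk _ ↦ ?_
  have hk : (1 : ℝ) ≤ k := by exact_mod_cast hk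
  have hd : (0 : ℝ) ≤ d := by exact_mod_cast hd
  have hnum : rise ((k : ℝ) + 1 + d) ν * (k + d) = rise ((k : ℝ) + d) ν * (k + d + ν) := by
    rw [add_right_comm]
    exact rise_add_one_left_mul (by linarith)
  have hden : rise ((k : ℝ) + 1) (ν - 1) * k = rise (k : ℝ) (ν - 1) * (k + (ν - 1)) :=
    rise_add_one_left_mul (by linarith)
  have hA : 0 < rise ((k : ℝ) + d) ν := rise_pos (by linarith) (by linarith)
  have hB : 0 < rise (k : ℝ) (ν - 1) := rise_pos (by linarith) (by linarith)
  have hB' : 0 < rise ((k : ℝ) + 1) (ν - 1) := rise_pos (by linarith) (by linarith)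
  push_cast
  rw [div_le_div_iff₀ hB hB']
  refine le_of_mul_le_mul_right ?_ (by positivity : (0 : ℝ) < k * (k + d))
  calc rise ((k : ℝ) + d) ν * rise ((k : ℝ) + 1) (ν - 1) * (k * (k + d))
      = rise ((k : ℝ) + d) ν * rise (k : ℝ) (ν - 1) * ((k + (ν - 1)) * (k + d)) := by
        linear_combination (rise ((k : ℝ) + d) ν * (k + d)) * hden
    _ ≤ rise ((k : ℝ) + d) ν * rise (k : ℝ) (ν - 1) * (k * (k + d + ν)) :=
        mul_le_mul_of_nonneg_left (by nlinarith) (by positivity)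
    _ = rise ((k : ℝ) + 1 + d) ν * rise (k : ℝ) (ν - 1) * (k * (k + d)) := by
        linear_combination (-(rise (k : ℝ) (ν - 1) * k)) * hnum

lemma Grn_eq (ν : ℝ) (a b t s : ℤ) :
    Grn ν a b t s = (rise ↑(t - s) ν - rise ↑(t - a) ν / rise ↑(b - a) ν * rise ↑(b - s) ν) /
      Real.Gamma (1 + ν) := by
  unfold Grn
  split_ifs with hts
  · rw [rise_intCast_of_nonpos (m := t - s) (by omega)]
    ring
  · ring

lemma Grn_sub_Grn_sub_one (hν : 0 < ν) (a b t s : ℤ) :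
    Grn ν a b t s - Grn ν a b (t - 1) s =
      (rise ↑(t - s) (ν - 1) - rise ↑(t - a) (ν - 1) / rise ↑(b - a) ν * rise ↑(b - s) ν) /
        Real.Gamma ν := by
  have hnabla (m : ℤ) : rise m ν - rise ↑(m - 1) ν = ν * rise m (ν - 1) := by
    simpa using rise_intCast_sub_rise_intCast_sub_one (μ := ν - 1) (by linarith) m
  have hΓ : Real.Gamma (1 + ν) = ν * Real.Gamma ν := by
    rw [add_comm, Real.Gamma_add_one hν.ne']
  rw [Grn_eq, Grn_eq, show t - 1 - s = t - s - 1 by ring, show t - 1 - a = t - a - 1 by ring,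
    ← sub_div, hΓ, ← div_div]
  congr 1
  rw [div_eq_iff hν.ne']
  linear_combination hnabla (t - s) - rise ↑(b - s) ν / rise ↑(b - a) ν * hnabla (t - a)

lemma Grn_sub_Grn_sub_one_nonneg (hν0 : 0 < ν) (hν1 : ν ≤ 1) {a b t s : ℤ} (has : a < s)
    (hst : s < t) (htb : t ≤ b) : 0 ≤ Grn ν a b t s - Grn ν a b (t - 1) s := by
  have hratio := rise_div_rise_sub_one_monotoneOn hν0 hν1 (d := b - t) (by omega)
    (Set.mem_Ici.2 (by omega : 1 ≤ t - s)) (Set.mem_Ici.2 (by omega : 1 ≤ t - a))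
    (by omega : t - s ≤ t - a)
  simp only [show t - s + (b - t) = b - s by ring, show t - a + (b - t) = b - a by ring]
    at hratio
  have hμ : (-1 : ℝ) < ν - 1 := by linarith
  rw [div_le_div_iff₀ (rise_intCast_pos (by omega) hμ) (rise_intCast_pos (by omega) hμ)]
    at hratio
  rw [Grn_sub_Grn_sub_one hν0, div_mul_eq_mul_div,
    sub_div' (rise_intCast_pos (by omega) (by linarith)).ne']
  refine div_nonneg (div_nonneg ?_ (rise_intCast_pos (by omega) (by linarith)).le)
    (Real.Gamma_pos_of_pos hν0).le
  linarith

lemma Grn_sub_Grn_sub_one_nonpos (hν : 0 < ν) {a b t s : ℤ} (hts : t ≤ s) :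
    Grn ν a b t s - Grn ν a b (t - 1) s ≤ 0 := by
  have hμ : (-1 : ℝ) < ν - 1 := by linarith
  rw [Grn_sub_Grn_sub_one hν, rise_intCast_of_nonpos (m := t - s) (by omega), zero_sub, neg_div]
  exact neg_nonpos.2 <| div_nonneg (mul_nonneg (div_nonneg (rise_intCast_nonneg hμ _)
    (rise_intCast_nonneg (by linarith) _)) (rise_intCast_nonneg (by linarith) _))
    (Real.Gamma_pos_of_pos hν).le

lemma sum_Icc_Grn_sub_Grn_sub_one (hν : 0 < ν) (a b t : ℤ) {c d : ℤ} (hcd : c - 1 ≤ d) :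
    ∑ s ∈ Icc c d, (Grn ν a b t s - Grn ν a b (t - 1) s) =
      ((rise ↑(t - c) ν - rise ↑(t - d - 1) ν) / ν -
        rise ↑(t - a) (ν - 1) / rise ↑(b - a) ν *
          ((rise ↑(b - c) (ν + 1) - rise ↑(b - d - 1) (ν + 1)) / (ν + 1))) / Real.Gamma ν := by
  simp_rw [Grn_sub_Grn_sub_one hν]
  rw [← sum_div, sum_sub_distrib, ← mul_sum, sum_Icc_rise_intCast (by linarith) t c hcd,
    sum_Icc_rise_intCast (by linarith) b c hcd, sub_add_cancel]

lemma sum_abs_Grn_sub_Grn_sub_one_eq (hν0 : 0 < ν) (hν1 : ν ≤ 1) {a b t : ℤ} (hat : a < t)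
    (htb : t ≤ b) :
    ∑ s ∈ Icc (a + 1) b, |Grn ν a b t s - Grn ν a b (t - 1) s| =
      (((t : ℝ) - a - 1) * rise ↑(t - a) (ν - 1) / ν -
        (((b : ℝ) - a - 1) * rise ↑(t - a) (ν - 1) -
          2 * (rise ↑(t - a) (ν - 1) / rise ↑(b - a) ν * rise ↑(b - t) (ν + 1))) / (ν + 1)) /
        Real.Gamma ν := by
  have hQ : rise ↑(b - a) ν ≠ 0 := (rise_intCast_pos (by omega) (by linarith)).ne'
  rw [sum_Icc_abs_eq_sub_of_sign (by omega) (by omega)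
      (fun s hs ↦ Grn_sub_Grn_sub_one_nonneg hν0 hν1 (by rw [mem_Icc] at hs; omega)
        (by rw [mem_Icc] at hs; omega) htb)
      (fun s hs ↦ Grn_sub_Grn_sub_one_nonpos hν0 (mem_Icc.1 hs).1),
    sum_Icc_Grn_sub_Grn_sub_one hν0 _ _ _ (by omega),
    sum_Icc_Grn_sub_Grn_sub_one hν0 _ _ _ (by omega)]
  have hP := rise_intCast_sub_one (t - a) (ν - 1)
  have hQ' := rise_intCast_sub_one (b - a) ν
  rw [sub_add_cancel] at hP
  simp only [show t - (a + 1) = t - a - 1 by ring, show b - (a + 1) = b - a - 1 by ring,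
    show b - (t - 1) - 1 = b - t by ring, hP, hQ']
  simp (disch := omega) only [rise_intCast_of_nonpos]
  push_cast at hQ ⊢
  field_simp
  ring

end GreenFunction

theorem greens_function_nabla_abs_sum_general (ν : ℝ) (hν : 0 < ν) (hν1 : ν < 1) (a b : ℤ) :
    ∀ t : ℤ, a + 1 ≤ t → t ≤ b →
      (∑ s ∈ Finset.Icc (a + 1) b, |Grn ν a b t s - Grn ν a b (t - 1) s|) ≤
        ((b : ℝ) - a) / (ν + 1) := by
  intro t hat htb
  have hP := rise_intCast_sub_one_mul_le hν hν1.le (by omega : 1 ≤ t - a) (j := (b : ℝ) - t)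
    (sub_nonneg.2 (by exact_mod_cast htb))
  rw [show ((t - a : ℤ) : ℝ) - 1 = (t : ℝ) - a - 1 by push_cast; ring] at hP
  set P := rise ↑(t - a) (ν - 1)
  set Q := rise ↑(b - a) ν
  have hQ : 0 < Q := rise_intCast_pos (by omega) (by linarith)
  have hW : P / Q * rise ↑(b - t) (ν + 1) ≤ P / Q * (((b : ℝ) - t) * Q) := by
    gcongr
    · exact div_nonneg (rise_intCast_nonneg (by linarith) _) hQ.le
    · exact_mod_cast rise_intCast_le_mul_rise hν.le (by omega : 0 ≤ b - t) (by omega)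
  have hΓ := Real.Gamma_pos_of_pos hν
  rw [sum_abs_Grn_sub_Grn_sub_one_eq hν hν1.le (by omega) htb]
  calc _ ≤ (((t : ℝ) - a - 1) * P / ν -
          (((b : ℝ) - a - 1) * P - 2 * (P / Q * (((b : ℝ) - t) * Q))) / (ν + 1)) /
            Real.Gamma ν := by gcongr
    _ = P * (((t : ℝ) - a - 1) + ν * (b - t)) / (ν * (ν + 1) * Real.Gamma ν) := by
        field_simp
        ring
    _ ≤ Real.Gamma (ν + 1) * (((t : ℝ) - a - 1) + (b - t)) / (ν * (ν + 1) * Real.Gamma ν) :=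
        div_le_div_of_nonneg_right hP (by positivity)
    _ = ((b : ℝ) - a - 1) / (ν + 1) := by
        rw [Real.Gamma_add_one hν.ne']
        field_simp
        ring
    _ ≤ ((b : ℝ) - a) / (ν + 1) := div_le_div_of_nonneg_right (by linarith) (by linarith)

theorem greens_function_nabla_abs_sum (ν : ℝ) (hν : 0 < ν) (hν1 : ν < 1) (a b : ℤ)
    (hab : a + 2 ≤ b) :
    ∀ t : ℤ, a + 1 ≤ t → t ≤ b →
      (∑ s ∈ Finset.Icc (a + 1) b, |Grn ν a b t s - Grn ν a b (t - 1) s|) ≤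
        ((b : ℝ) - a) / (ν + 1) :=
  greens_function_nabla_abs_sum_general ν hν hν1 a b
end
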